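/- Let d be a positive non-square integer, let l be the minimal period of the continued fraction expansion of √d, and let p_{l−1}/q_{l−1} be the (l−1)-th convergent of √d. Then ε = p_{l−1} + q_{l−1}√d satisfies |p_{l−1}² − d·q_{l−1}²| = 1 and ε > 1, and ε is the fundamental unit of ℤ[√d]: for all integers u, v with |u² − d·v²| = 1 and u + v√d > 1, one has u + v√d ≥ ε. -/

import Mathlib

/-- The `n`-th total quotient `α_n` of the continued fraction expansion of `θ`:
`α_0 = θ`, `α_{n+1} = 1/(α_n - ⌊α_n⌋)`. -/
noncomputable def cfAlpha (θ : ℝ) : ℕ → ℝ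
  | 0 => θ
  | n + 1 => 1 / Int.fract (cfAlpha θ n)

/-- The `n`-th partial quotient `a_n` of the continued fraction expansion of `θ`. -/
noncomputable def cfA (θ : ℝ) (n : ℕ) : ℤ := ⌊cfAlpha θ n⌋

/-- Numerators of the convergents of `θ`, shifted by two:
`cfP θ (n+2) = p_n`, with `p_{-2} = 0`, `p_{-1} = 1`, `p_n = a_n p_{n-1} + p_{n-2}`. -/
noncomputable def cfP (θ : ℝ) : ℕ → ℤ
  | 0 => 0
  | 1 => 1
  | n + 2 => cfA θ n * cfP θ (n + 1) + cfP θ n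

/-- Denominators of the convergents of `θ`, shifted by two:
`cfQ θ (n+2) = q_n`, with `q_{-2} = 1`, `q_{-1} = 0`, `q_n = a_n q_{n-1} + q_{n-2}`. -/
noncomputable def cfQ (θ : ℝ) : ℕ → ℤ
  | 0 => 1
  | 1 => 0
  | n + 2 => cfA θ n * cfQ θ (n + 1) + cfQ θ n

/-! The convergents of `√d` satisfy `p_{n-1}² - d q_{n-1}² = (-1)ⁿ Qₙ`, where the complete quotients
are `αₙ = (Pₙ + √d) / Qₙ` with `Qₙ > 0`. Since `√d` is irrational, `Qₙ = 1` exactly when `αₙ ≡ √d`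
modulo `ℤ`, i.e. exactly when `n` is a period of `a₁, a₂, …`; so `p_{l-1} + q_{l-1}√d` is a unit.
Conversely a unit `u + v√d > 1` has `u, v > 0` and `|√d - u / v| < 1 / (2v²)`, so by Legendre's
theorem `u / v = p_{n-1} / q_{n-1}` for some `n ≥ 1` with `Qₙ = 1`. Then `n` is a period, `l ≤ n`,
and the convergents increase with the index. -/

namespace ContFrac

theorem cfP_add_two (θ : ℝ) (n : ℕ) : cfP θ (n + 2) = cfA θ n * cfP θ (n + 1) + cfP θ n := rfl

theorem cfQ_add_two (θ : ℝ) (n : ℕ) : cfQ θ (n + 2) = cfA θ n * cfQ θ (n + 1) + cfQ θ n := rfl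

theorem cfAlpha_add (θ : ℝ) (m : ℕ) : ∀ k, cfAlpha θ (m + k) = cfAlpha (cfAlpha θ m) k
  | 0 => rfl
  | k + 1 => congrArg (fun x => 1 / Int.fract x) (cfAlpha_add θ m k)

theorem cfA_add (θ : ℝ) (m k : ℕ) : cfA θ (m + k) = cfA (cfAlpha θ m) k :=
  congrArg Int.floor (cfAlpha_add θ m k)

theorem cfP_congr {θ₁ θ₂ : ℝ} (h : cfA θ₁ = cfA θ₂) : ∀ n, cfP θ₁ n = cfP θ₂ n
  | 0 | 1 => rfl
  | n + 2 => by rw [cfP_add_two, cfP_add_two, h, cfP_congr h n, cfP_congr h (n + 1)]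

theorem cfQ_congr {θ₁ θ₂ : ℝ} (h : cfA θ₁ = cfA θ₂) : ∀ n, cfQ θ₁ n = cfQ θ₂ n
  | 0 | 1 => rfl
  | n + 2 => by rw [cfQ_add_two, cfQ_add_two, h, cfQ_congr h n, cfQ_congr h (n + 1)]

theorem cfP_mul_cfQ_sub (θ : ℝ) :
    ∀ n, cfP θ (n + 1) * cfQ θ n - cfP θ n * cfQ θ (n + 1) = (-1) ^ n
  | 0 => by simp [cfP, cfQ]
  | n + 1 => by
    rw [cfP_add_two, cfQ_add_two, pow_succ]
    linear_combination (-1 : ℤ) * cfP_mul_cfQ_sub θ n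

theorem isCoprime_cfP_cfQ (θ : ℝ) (n : ℕ) : IsCoprime (cfP θ (n + 1)) (cfQ θ (n + 1)) :=
  ⟨(-1) ^ n * cfQ θ n, -(-1) ^ n * cfP θ n, by
    have hsq : (-1 : ℤ) ^ n * (-1) ^ n = 1 := by rw [← mul_pow]; norm_num
    linear_combination (-1 : ℤ) ^ n * cfP_mul_cfQ_sub θ n + hsq⟩

theorem exists_eq_mul_cfP_add_mul_cfP (θ : ℝ) (n : ℕ) (u v : ℤ) : ∃ x y : ℤ,
    u = x * cfP θ (n + 1) + y * cfP θ (n + 2) ∧ v = x * cfQ θ (n + 1) + y * cfQ θ (n + 2) := by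
  have hdet := cfP_mul_cfQ_sub θ (n + 1)
  have hsq : (-1 : ℤ) ^ n * (-1) ^ n = 1 := by rw [← mul_pow]; norm_num
  refine ⟨(-1) ^ n * (u * cfQ θ (n + 2) - v * cfP θ (n + 2)),
    (-1) ^ n * (v * cfP θ (n + 1) - u * cfQ θ (n + 1)), ?_, ?_⟩
  · linear_combination (-1 : ℤ) ^ n * u * hdet - u * hsq
  · linear_combination (-1 : ℤ) ^ n * v * hdet - v * hsq

theorem eq_and_eq_of_isCoprime {a b c d : ℤ} (hab : IsCoprime a b) (hcd : IsCoprime c d)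
    (hb : 0 < b) (hd : 0 < d) (h : a * d = c * b) : a = c ∧ b = d :=
  Rat.div_int_inj hb hd (Int.isCoprime_iff_gcd_eq_one.1 hab) (Int.isCoprime_iff_gcd_eq_one.1 hcd)
    ((div_eq_div_iff (by positivity) (by positivity)).2 (by exact_mod_cast h))

noncomputable def cfErr (θ : ℝ) (n : ℕ) : ℝ := θ * cfQ θ n - cfP θ n

section Irrational

variable {θ : ℝ} (hθ : Irrational θ)
include hθ

theorem irrational_cfAlpha : ∀ n, Irrational (cfAlpha θ n)
  | 0 => hθ
  | n + 1 => by
    show Irrational (1 / Int.fract _)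
    rw [one_div, Int.fract]
    exact ((irrational_cfAlpha n).sub_intCast _).inv

theorem fract_cfAlpha_pos (n : ℕ) : 0 < Int.fract (cfAlpha θ n) :=
  (Int.fract_nonneg _).lt_of_ne fun h =>
    (irrational_cfAlpha hθ n).ne_int ⌊cfAlpha θ n⌋ (by linarith [Int.floor_add_fract (cfAlpha θ n)])

theorem one_lt_cfAlpha_succ (n : ℕ) : 1 < cfAlpha θ (n + 1) :=
  (one_lt_div (fract_cfAlpha_pos hθ n)).2 (Int.fract_lt_one _)

theorem cfAlpha_succ_mul_sub_cfA (n : ℕ) :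
    cfAlpha θ (n + 1) * (cfAlpha θ n - cfA θ n) = 1 := by
  rw [cfA, Int.self_sub_floor]
  exact one_div_mul_cancel (fract_cfAlpha_pos hθ n).ne'

theorem one_le_cfA_succ (n : ℕ) : 1 ≤ cfA θ (n + 1) :=
  Int.le_floor.2 (by exact_mod_cast (one_lt_cfAlpha_succ hθ n).le)

theorem cfQ_nonneg : ∀ n, 0 ≤ cfQ θ n
  | 0 => zero_le_one
  | 1 => le_rfl
  | 2 => by simp [cfQ]
  | n + 3 => by
    rw [cfQ_add_two]
    have := one_le_cfA_succ hθ n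
    have := cfQ_nonneg (n + 1)
    have := cfQ_nonneg (n + 2)
    positivity

theorem cfQ_mono : Monotone fun n => cfQ θ (n + 1) := by
  refine monotone_nat_of_le_succ fun n => ?_
  cases n with
  | zero => simp [cfQ]
  | succ n =>
    simp only [cfQ_add_two θ (n + 1)]
    nlinarith [one_le_cfA_succ hθ n, cfQ_nonneg hθ (n + 1), cfQ_nonneg hθ (n + 2)]

theorem one_le_cfQ (n : ℕ) : 1 ≤ cfQ θ (n + 2) :=
  (show (1 : ℤ) = cfQ θ 2 by simp [cfQ]).le.trans (cfQ_mono hθ (Nat.le_add_left 1 n))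

theorem le_cfQ : ∀ n : ℕ, (n : ℤ) ≤ cfQ θ (n + 2)
  | 0 => cfQ_nonneg hθ 2
  | 1 => one_le_cfQ hθ 1
  | n + 2 => by
    have ih : ((n + 1 : ℕ) : ℤ) ≤ cfQ θ (n + 2 + 1) := le_cfQ (n + 1)
    rw [cfQ_add_two]
    push_cast at ih ⊢
    nlinarith [one_le_cfQ hθ n, one_le_cfA_succ hθ (n + 1)]

theorem exists_cfQ_le_lt {v : ℤ} (hv : 1 ≤ v) : ∃ n, cfQ θ (n + 2) ≤ v ∧ v < cfQ θ (n + 3) := by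
  classical
  have hex : ∃ n, v < cfQ θ (n + 2) :=
    ⟨v.toNat + 1, by have := le_cfQ hθ (v.toNat + 1); push_cast at this; omega⟩
  obtain ⟨n, hn⟩ : ∃ n, Nat.find hex = n + 1 :=
    Nat.exists_eq_succ_of_ne_zero fun h0 =>
      (Nat.find_spec hex).not_ge (by rw [h0]; simpa [cfQ] using hv)
  have hspec := Nat.find_spec hex
  rw [hn] at hspec
  exact ⟨n, not_lt.1 (Nat.find_min hex (hn ▸ n.lt_succ_self)), hspec⟩

theorem one_le_cfA (h1 : 1 ≤ θ) : ∀ n, 1 ≤ cfA θ n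
  | 0 => Int.le_floor.2 (by exact_mod_cast h1)
  | n + 1 => one_le_cfA_succ hθ n

theorem cfP_nonneg (h1 : 1 ≤ θ) : ∀ n, 0 ≤ cfP θ n
  | 0 => le_rfl
  | 1 => zero_le_one
  | n + 2 => by
    rw [cfP_add_two]
    have := one_le_cfA hθ h1 n
    have := cfP_nonneg h1 n
    have := cfP_nonneg h1 (n + 1)
    positivity

theorem cfP_mono (h1 : 1 ≤ θ) : Monotone fun n => cfP θ (n + 1) :=
  monotone_nat_of_le_succ fun n => by
    simp only [cfP_add_two θ n]
    nlinarith [one_le_cfA hθ h1 n, cfP_nonneg hθ h1 n, cfP_nonneg hθ h1 (n + 1)]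

theorem one_le_cfP (h1 : 1 ≤ θ) (n : ℕ) : 1 ≤ cfP θ (n + 1) :=
  cfP_mono hθ h1 (Nat.zero_le n)

theorem mul_cfAlpha_denom_eq : ∀ n,
    θ * (cfAlpha θ n * cfQ θ (n + 1) + cfQ θ n) = cfAlpha θ n * cfP θ (n + 1) + cfP θ n
  | 0 => by simp [cfAlpha, cfP, cfQ]
  | n + 1 => by
    rw [cfP_add_two, cfQ_add_two]
    push_cast
    linear_combination cfAlpha θ (n + 1) * mul_cfAlpha_denom_eq n -
      (θ * cfQ θ (n + 1) - cfP θ (n + 1)) * cfAlpha_succ_mul_sub_cfA hθ n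

theorem cfErr_mul_cfAlpha_denom (n : ℕ) :
    cfErr θ (n + 1) * (cfAlpha θ n * cfQ θ (n + 1) + cfQ θ n) = (-1) ^ (n + 1) := by
  have hdet : (cfP θ (n + 1) * cfQ θ n - cfP θ n * cfQ θ (n + 1) : ℝ) = (-1) ^ n := by
    exact_mod_cast cfP_mul_cfQ_sub θ n
  rw [cfErr, pow_succ]
  linear_combination (cfQ θ (n + 1) : ℝ) * mul_cfAlpha_denom_eq hθ n - hdet

theorem cfQ_le_cfAlpha_denom (n : ℕ) :
    max 1 (cfQ θ (n + 1) : ℝ) ≤ cfAlpha θ n * cfQ θ (n + 1) + cfQ θ n := by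
  cases n with
  | zero => simp [cfQ]
  | succ n =>
    have hQ : (1 : ℝ) ≤ cfQ θ (n + 2) := by exact_mod_cast one_le_cfQ hθ n
    have hQ' : (0 : ℝ) ≤ cfQ θ (n + 1) := by exact_mod_cast cfQ_nonneg hθ (n + 1)
    have hα := one_lt_cfAlpha_succ hθ n
    exact max_le (by nlinarith) (by nlinarith)

theorem cfAlpha_denom_pos (n : ℕ) : 0 < cfAlpha θ n * cfQ θ (n + 1) + cfQ θ n :=
  zero_lt_one.trans_le ((le_max_left _ _).trans (cfQ_le_cfAlpha_denom hθ n))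

theorem abs_cfErr_mul_cfQ_le_one (n : ℕ) : |cfErr θ (n + 1)| * cfQ θ (n + 1) ≤ 1 := by
  have h := congrArg abs (cfErr_mul_cfAlpha_denom hθ n)
  rw [abs_mul, abs_pow, abs_neg, abs_one, one_pow, abs_of_pos (cfAlpha_denom_pos hθ n)] at h
  calc |cfErr θ (n + 1)| * cfQ θ (n + 1)
      ≤ |cfErr θ (n + 1)| * (cfAlpha θ n * cfQ θ (n + 1) + cfQ θ n) :=
        mul_le_mul_of_nonneg_left (le_of_max_le_right (cfQ_le_cfAlpha_denom hθ n)) (abs_nonneg _)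
    _ = 1 := h

theorem neg_one_pow_mul_cfErr_pos (n : ℕ) : 0 < (-1) ^ (n + 1) * cfErr θ (n + 1) := by
  refine pos_of_mul_pos_left ?_ (cfAlpha_denom_pos hθ n).le
  rw [mul_assoc, cfErr_mul_cfAlpha_denom hθ, ← mul_pow]
  norm_num

theorem cfErr_mul_cfErr_succ_neg (n : ℕ) : cfErr θ (n + 1) * cfErr θ (n + 2) < 0 := by
  have h := mul_pos (neg_one_pow_mul_cfErr_pos hθ n) (neg_one_pow_mul_cfErr_pos hθ (n + 1))
  rw [pow_succ _ (n + 1)] at h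
  have hsq : (-1 : ℝ) ^ (n + 1) * (-1) ^ (n + 1) = 1 := by rw [← mul_pow]; norm_num
  nlinarith

/-- Lagrange's best approximation property of the convergents. -/
theorem abs_cfErr_le (n : ℕ) {u v : ℤ} (hv : 0 < v) (hvQ : v < cfQ θ (n + 2)) :
    |cfErr θ (n + 1)| ≤ |θ * v - u| := by
  obtain ⟨x, y, rfl, rfl⟩ := exists_eq_mul_cfP_add_mul_cfP θ n u v
  have hQ := cfQ_nonneg hθ (n + 1)
  have hx : x ≠ 0 := by
    rintro rfl
    rw [zero_mul, zero_add] at hv hvQ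
    nlinarith [pos_of_mul_pos_left hv (by linarith)]
  have hxy : x * y ≤ 0 := by
    by_contra! hxy
    rcases lt_or_gt_of_ne hx with hx' | hx'
    · nlinarith [neg_of_mul_pos_right hxy hx'.le]
    · nlinarith [pos_of_mul_pos_right hxy hx'.le]
  have hsplit : θ * ((x * cfQ θ (n + 1) + y * cfQ θ (n + 2) : ℤ) : ℝ) -
      ((x * cfP θ (n + 1) + y * cfP θ (n + 2) : ℤ) : ℝ) =
        x * cfErr θ (n + 1) + y * cfErr θ (n + 2) := by
    push_cast [cfErr]
    ring
  -- no cancellation: `x y ≤ 0` while consecutive errors have opposite signs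
  have hsame : 0 ≤ (x * cfErr θ (n + 1)) * (y * cfErr θ (n + 2)) := by
    have hxyR : ((x * y : ℤ) : ℝ) ≤ 0 := by exact_mod_cast hxy
    push_cast at hxyR
    nlinarith [cfErr_mul_cfErr_succ_neg hθ n]
  have hx1 : (1 : ℝ) ≤ |(x : ℝ)| := by exact_mod_cast Int.one_le_abs hx
  rw [hsplit, (abs_add_eq_add_abs_iff _ _).2 (mul_nonneg_iff.1 hsame), abs_mul]
  nlinarith [abs_nonneg (cfErr θ (n + 1)), abs_nonneg (y * cfErr θ (n + 2))]

/-- Legendre's theorem, with `|θ - u / v| < 1 / (2 v²)` multiplied out. -/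
theorem exists_eq_cfP_cfQ {u v : ℤ} (hv : 0 < v) (huv : IsCoprime u v)
    (h : 2 * v * |θ * v - u| < 1) :
    ∃ n, 1 ≤ n ∧ cfP θ (n + 1) = u ∧ cfQ θ (n + 1) = v := by
  obtain ⟨n, hQv, hvQ⟩ := exists_cfQ_le_lt hθ hv
  have hQ : 0 < cfQ θ (n + 2) := one_le_cfQ hθ n
  have hQvR : (cfQ θ (n + 2) : ℝ) ≤ v := by exact_mod_cast hQv
  have hbest : |cfErr θ (n + 2)| ≤ |θ * v - u| := abs_cfErr_le hθ (n + 1) hv hvQ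
  have hcross : |((cfP θ (n + 2) * v - u * cfQ θ (n + 2) : ℤ) : ℝ)| < 1 :=
    calc |((cfP θ (n + 2) * v - u * cfQ θ (n + 2) : ℤ) : ℝ)|
        = |cfQ θ (n + 2) * (θ * v - u) + v * -cfErr θ (n + 2)| := by
          push_cast [cfErr]; ring_nf
      _ ≤ cfQ θ (n + 2) * |θ * v - u| + v * |cfErr θ (n + 2)| := by
          refine (abs_add_le _ _).trans_eq ?_
          rw [abs_mul, abs_mul, abs_neg, abs_of_pos (by exact_mod_cast hQ : (0 : ℝ) < _),
            abs_of_pos (by exact_mod_cast hv : (0 : ℝ) < v)]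
      _ ≤ v * |θ * v - u| + v * |θ * v - u| := by gcongr
      _ < 1 := by linarith
  have heq : cfP θ (n + 2) * v = u * cfQ θ (n + 2) := by
    rw [← sub_eq_zero, ← Int.abs_lt_one_iff]
    exact_mod_cast hcross
  exact ⟨n + 1, Nat.le_add_left 1 n, eq_and_eq_of_isCoprime (isCoprime_cfP_cfQ θ _) huv hQ hv heq⟩

end Irrational

theorem eq_of_cfA_eq {θ₁ θ₂ : ℝ} (h₁ : Irrational θ₁) (h₂ : Irrational θ₂) (h : cfA θ₁ = cfA θ₂) :
    θ₁ = θ₂ := by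
  have key : ∀ n : ℕ, |θ₁ - θ₂| * n ≤ 2 := fun n => by
    have hQ₀ : (n : ℝ) ≤ cfQ θ₁ (n + 2) := by exact_mod_cast le_cfQ h₁ n
    have hQ₁ : (1 : ℝ) ≤ cfQ θ₁ (n + 2) := by exact_mod_cast one_le_cfQ h₁ n
    set Q : ℝ := ((cfQ θ₁ (n + 2) : ℤ) : ℝ)
    set P : ℝ := ((cfP θ₁ (n + 2) : ℤ) : ℝ)
    have e₁ : |θ₁ * Q - P| * Q ≤ 1 := abs_cfErr_mul_cfQ_le_one h₁ (n + 1)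
    have e₂ : |θ₂ * Q - P| * Q ≤ 1 := by
      simpa only [cfErr, ← cfP_congr h, ← cfQ_congr h] using abs_cfErr_mul_cfQ_le_one h₂ (n + 1)
    have hsplit : |θ₁ - θ₂| * Q ≤ |θ₁ * Q - P| + |θ₂ * Q - P| :=
      calc |θ₁ - θ₂| * Q = |(θ₁ - θ₂) * Q| := by
            rw [abs_mul, abs_of_nonneg (by linarith : 0 ≤ Q)]
        _ = |(θ₁ * Q - P) - (θ₂ * Q - P)| := by ring_nf
        _ ≤ _ := abs_sub _ _
    nlinarith [abs_nonneg (θ₁ - θ₂), abs_nonneg (θ₁ * Q - P), abs_nonneg (θ₂ * Q - P)]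
  by_contra hne
  have hpos : 0 < |θ₁ - θ₂| := abs_pos.2 (sub_ne_zero.2 hne)
  obtain ⟨n, hn⟩ := exists_nat_gt (2 / |θ₁ - θ₂|)
  rw [div_lt_iff₀ hpos] at hn
  linarith [key n]

theorem cfA_periodic_iff_fract_eq {θ : ℝ} (hθ : Irrational θ) (n : ℕ) :
    (∀ m, 1 ≤ m → cfA θ (m + n) = cfA θ m) ↔ Int.fract (cfAlpha θ n) = Int.fract θ := by
  have hα : cfAlpha θ (n + 1) = cfAlpha θ 1 ↔ Int.fract (cfAlpha θ n) = Int.fract θ := by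
    show 1 / Int.fract (cfAlpha θ n) = 1 / Int.fract θ ↔ _
    rw [one_div, one_div, inv_inj]
  rw [← hα]
  constructor
  · intro h
    refine eq_of_cfA_eq (irrational_cfAlpha hθ _) (irrational_cfAlpha hθ _) (funext fun k => ?_)
    rw [← cfA_add, ← cfA_add, show n + 1 + k = 1 + k + n by omega]
    exact h _ (Nat.le_add_right 1 k)
  · intro h m hm
    obtain ⟨k, rfl⟩ := Nat.exists_eq_add_of_le hm
    rw [show 1 + k + n = n + 1 + k by omega, cfA_add, h, ← cfA_add]

section Sqrt

variable {d : ℕ}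

theorem two_le_of_not_isSquare (hd : ¬IsSquare d) : 2 ≤ d := by
  have h0 : d ≠ 0 := by rintro rfl; exact hd ⟨0, rfl⟩
  have h1 : d ≠ 1 := by rintro rfl; exact hd ⟨1, rfl⟩
  omega

theorem one_lt_sqrt_of_not_isSquare (hd : ¬IsSquare d) : 1 < √(d : ℝ) := by
  rw [Real.lt_sqrt zero_le_one, one_pow]
  exact_mod_cast two_le_of_not_isSquare hd

theorem abs_sub_mul_abs_add_eq_one {u v : ℤ} (huv : |u ^ 2 - d * v ^ 2| = 1) :
    |u - v * √(d : ℝ)| * |u + v * √(d : ℝ)| = 1 := by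
  have h : (u - v * √(d : ℝ)) * (u + v * √(d : ℝ)) = ((u ^ 2 - d * v ^ 2 : ℤ) : ℝ) := by
    push_cast
    linear_combination (-(v : ℝ) ^ 2) * Real.sq_sqrt (Nat.cast_nonneg d)
  rw [← abs_mul, h]
  exact_mod_cast huv

theorem pos_of_one_lt_add_mul_sqrt {u v : ℤ} (huv : |u ^ 2 - d * v ^ 2| = 1)
    (h : 1 < u + v * √(d : ℝ)) : 0 < u ∧ 0 < v := by
  have hprod := abs_sub_mul_abs_add_eq_one huv
  rw [abs_of_pos (zero_lt_one.trans h)] at hprod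
  have hsmall : |u - v * √(d : ℝ)| < 1 := by nlinarith [abs_nonneg ((u : ℝ) - v * √(d : ℝ))]
  obtain ⟨hlo, hhi⟩ := abs_lt.1 hsmall
  have hu : (0 : ℝ) < u := by linarith
  have hv : (0 : ℝ) < v * √(d : ℝ) := by linarith
  exact ⟨by exact_mod_cast hu, by exact_mod_cast pos_of_mul_pos_left hv (Real.sqrt_nonneg _)⟩

/-- `quadNum d n` and `quadDen d n` are the integers `Pₙ`, `Qₙ` with `αₙ = (Pₙ + √d) / Qₙ` for the
complete quotients of `√d`. -/
noncomputable def quadDen (d n : ℕ) : ℤ :=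
  (-1) ^ n * (cfP √(d : ℝ) (n + 1) ^ 2 - d * cfQ √(d : ℝ) (n + 1) ^ 2)

noncomputable def quadNum (d n : ℕ) : ℤ :=
  (-1) ^ n * (d * cfQ √(d : ℝ) (n + 1) * cfQ √(d : ℝ) n - cfP √(d : ℝ) (n + 1) * cfP √(d : ℝ) n)

variable (hd : ¬IsSquare d)
include hd

theorem cfAlpha_mul_quadDen (n : ℕ) :
    cfAlpha √(d : ℝ) n * quadDen d n = quadNum d n + √(d : ℝ) := by
  have hθ := mul_cfAlpha_denom_eq (irrational_sqrt_natCast_iff.2 hd) n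
  have hdet : (cfP √(d : ℝ) (n + 1) * cfQ √(d : ℝ) n - cfP √(d : ℝ) n * cfQ √(d : ℝ) (n + 1) : ℝ)
      = (-1) ^ n := by exact_mod_cast cfP_mul_cfQ_sub √(d : ℝ) n
  have hsq : (-1 : ℝ) ^ n * (-1) ^ n = 1 := by rw [← mul_pow]; norm_num
  set s : ℝ := (-1) ^ n
  set α := cfAlpha √(d : ℝ) n
  set A : ℝ := ((cfQ √(d : ℝ) (n + 1) : ℤ) : ℝ)
  set B : ℝ := ((cfQ √(d : ℝ) n : ℤ) : ℝ)
  set C : ℝ := ((cfP √(d : ℝ) (n + 1) : ℤ) : ℝ)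
  set D : ℝ := ((cfP √(d : ℝ) n : ℤ) : ℝ)
  simp only [quadDen, quadNum]
  push_cast
  linear_combination (s * (-(√(d : ℝ) * A + C))) * hθ +
    (s * (α * A ^ 2 + A * B)) * Real.sq_sqrt (Nat.cast_nonneg d) + (s * √(d : ℝ)) * hdet +
    √(d : ℝ) * hsq

theorem quadDen_pos (n : ℕ) : 0 < quadDen d n := by
  have hθ := irrational_sqrt_natCast_iff.2 hd
  have h1 := one_lt_sqrt_of_not_isSquare hd
  have hP : (1 : ℝ) ≤ cfP √(d : ℝ) (n + 1) := by exact_mod_cast one_le_cfP hθ h1.le n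
  have hQ : (0 : ℝ) ≤ cfQ √(d : ℝ) (n + 1) := by exact_mod_cast cfQ_nonneg hθ (n + 1)
  have hfac : (quadDen d n : ℝ) = (-1) ^ (n + 1) * cfErr √(d : ℝ) (n + 1) *
      (cfP √(d : ℝ) (n + 1) + √(d : ℝ) * cfQ √(d : ℝ) (n + 1)) := by
    simp only [quadDen, cfErr]
    push_cast
    linear_combination ((-1 : ℝ) ^ n * (cfQ √(d : ℝ) (n + 1) : ℝ) ^ 2) *
      Real.sq_sqrt (Nat.cast_nonneg d)
  have hpos : (0 : ℝ) < quadDen d n := by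
    rw [hfac]
    exact mul_pos (neg_one_pow_mul_cfErr_pos hθ n) (by positivity)
  exact_mod_cast hpos

theorem quadDen_eq_one_iff (n : ℕ) :
    quadDen d n = 1 ↔ |cfP √(d : ℝ) (n + 1) ^ 2 - d * cfQ √(d : ℝ) (n + 1) ^ 2| = 1 := by
  rw [← abs_of_pos (quadDen_pos hd n), quadDen, abs_mul, abs_pow, abs_neg, abs_one, one_pow,
    one_mul]

theorem fract_cfAlpha_eq_iff (n : ℕ) :
    Int.fract (cfAlpha √(d : ℝ) n) = Int.fract √(d : ℝ) ↔ quadDen d n = 1 := by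
  have h := cfAlpha_mul_quadDen hd n
  rw [Int.fract_eq_fract]
  constructor
  · rintro ⟨z, hz⟩
    by_contra hne
    have hlin : √(d : ℝ) * ((quadDen d n - 1 : ℤ) : ℝ) =
        ((quadNum d n - z * quadDen d n : ℤ) : ℝ) := by
      push_cast
      linear_combination h - (quadDen d n : ℝ) * hz
    exact ((irrational_sqrt_natCast_iff.2 hd).mul_intCast (sub_ne_zero.2 hne)).ne_int _ hlin
  · intro h1
    rw [h1, Int.cast_one, mul_one] at h
    exact ⟨quadNum d n, by rw [h]; ring⟩

theorem cfA_sqrt_periodic_iff (n : ℕ) : (∀ m, 1 ≤ m → cfA √(d : ℝ) (m + n) = cfA √(d : ℝ) m) ↔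
    |cfP √(d : ℝ) (n + 1) ^ 2 - d * cfQ √(d : ℝ) (n + 1) ^ 2| = 1 :=
  (cfA_periodic_iff_fract_eq (irrational_sqrt_natCast_iff.2 hd) n).trans
    ((fract_cfAlpha_eq_iff hd n).trans (quadDen_eq_one_iff hd n))

theorem exists_eq_cfP_cfQ_of_abs_eq_one {u v : ℤ} (hu : 0 < u) (hv : 0 < v)
    (huv : |u ^ 2 - d * v ^ 2| = 1) :
    ∃ n, 1 ≤ n ∧ cfP √(d : ℝ) (n + 1) = u ∧ cfQ √(d : ℝ) (n + 1) = v := by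
  have h1 := one_lt_sqrt_of_not_isSquare hd
  have hcop : IsCoprime u v := by
    rcases (abs_eq zero_le_one).1 huv with h | h
    · exact ⟨u, -(d * v), by linear_combination h⟩
    · exact ⟨-u, d * v, by linear_combination -h⟩
  have hvu : v ≤ u := by
    have : (2 : ℤ) ≤ d := by exact_mod_cast two_le_of_not_isSquare hd
    rcases (abs_eq zero_le_one).1 huv with h | h <;> nlinarith
  have hprod := abs_sub_mul_abs_add_eq_one huv
  have huR : (v : ℝ) ≤ u := by exact_mod_cast hvu
  have hvR : (0 : ℝ) < v := by exact_mod_cast hv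
  rw [abs_of_pos (a := (u : ℝ) + v * √(d : ℝ)) (by positivity), abs_sub_comm] at hprod
  refine exists_eq_cfP_cfQ (irrational_sqrt_natCast_iff.2 hd) hv hcop ?_
  rw [mul_comm √(d : ℝ)]
  nlinarith [abs_nonneg (v * √(d : ℝ) - u)]

end Sqrt

end ContFrac

open ContFrac

theorem stmt_4_general (d : ℕ) (hns : ¬ IsSquare d) (l : ℕ)
    (hl : IsLeast {p : ℕ | 0 < p ∧ ∀ n, 1 ≤ n →
      cfA (Real.sqrt d) (n + p) = cfA (Real.sqrt d) n} l) :
    |cfP (Real.sqrt d) (l + 1) ^ 2 - (d : ℤ) * cfQ (Real.sqrt d) (l + 1) ^ 2| = 1 ∧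
    1 < (cfP (Real.sqrt d) (l + 1) : ℝ) + (cfQ (Real.sqrt d) (l + 1) : ℝ) * Real.sqrt d ∧
    ∀ u v : ℤ, |u ^ 2 - (d : ℤ) * v ^ 2| = 1 →
      1 < (u : ℝ) + (v : ℝ) * Real.sqrt d →
      (cfP (Real.sqrt d) (l + 1) : ℝ) + (cfQ (Real.sqrt d) (l + 1) : ℝ) * Real.sqrt d ≤
        (u : ℝ) + (v : ℝ) * Real.sqrt d := by
  have hθ := irrational_sqrt_natCast_iff.2 hns
  have h1 := one_lt_sqrt_of_not_isSquare hns
  obtain ⟨⟨hl0, hper⟩, hmin⟩ := hl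
  refine ⟨(cfA_sqrt_periodic_iff hns l).1 hper, ?_, fun u v huv hgt => ?_⟩
  · obtain ⟨k, rfl⟩ := Nat.exists_eq_add_of_le' hl0
    have hP : (1 : ℝ) ≤ cfP √(d : ℝ) (k + 1 + 1) := by exact_mod_cast one_le_cfP hθ h1.le _
    have hQ : (1 : ℝ) ≤ cfQ √(d : ℝ) (k + 1 + 1) := by exact_mod_cast one_le_cfQ hθ k
    nlinarith
  · obtain ⟨hu, hv⟩ := pos_of_one_lt_add_mul_sqrt huv hgt
    obtain ⟨n, hn, rfl, rfl⟩ := exists_eq_cfP_cfQ_of_abs_eq_one hns hu hv huv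
    have hln : l ≤ n := hmin ⟨hn, (cfA_sqrt_periodic_iff hns n).2 huv⟩
    have hP : (cfP √(d : ℝ) (l + 1) : ℝ) ≤ cfP √(d : ℝ) (n + 1) := by
      exact_mod_cast cfP_mono hθ h1.le hln
    have hQ : (cfQ √(d : ℝ) (l + 1) : ℝ) ≤ cfQ √(d : ℝ) (n + 1) := by
      exact_mod_cast cfQ_mono hθ hln
    exact add_le_add hP (mul_le_mul_of_nonneg_right hQ (Real.sqrt_nonneg _))

/-- for a positive non-square integer `d` with minimal period `l` of the
continued fraction of `√d` and `(l-1)`-th convergent `p_{l-1}/q_{l-1}` (note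
`p_{l-1} = cfP (√d) (l+1)`, `q_{l-1} = cfQ (√d) (l+1)`), the number
`ε = p_{l-1} + q_{l-1}√d` satisfies `|p_{l-1}² - d q_{l-1}²| = 1`, `ε > 1`, and `ε` is the
fundamental unit of `ℤ[√d]`: any `u + v√d > 1` with `|u² - d v²| = 1` satisfies
`u + v√d ≥ ε`. -/
theorem stmt_4 (d : ℕ) (hd : 0 < d) (hns : ¬ IsSquare d) (l : ℕ)
    (hl : IsLeast {p : ℕ | 0 < p ∧ ∀ n, 1 ≤ n →
      cfA (Real.sqrt d) (n + p) = cfA (Real.sqrt d) n} l) :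
    |cfP (Real.sqrt d) (l + 1) ^ 2 - (d : ℤ) * cfQ (Real.sqrt d) (l + 1) ^ 2| = 1 ∧
    1 < (cfP (Real.sqrt d) (l + 1) : ℝ) + (cfQ (Real.sqrt d) (l + 1) : ℝ) * Real.sqrt d ∧
    ∀ u v : ℤ, |u ^ 2 - (d : ℤ) * v ^ 2| = 1 →
      1 < (u : ℝ) + (v : ℝ) * Real.sqrt d →
      (cfP (Real.sqrt d) (l + 1) : ℝ) + (cfQ (Real.sqrt d) (l + 1) : ℝ) * Real.sqrt d ≤
        (u : ℝ) + (v : ℝ) * Real.sqrt d :=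
  stmt_4_general d hns l hl
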